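/- arXiv:2101.06473 — 5 statements merged into one kernel-verified Lean document; each statement's English description precedes it below -/
import Mathlib

section
/- Let (Y, 𝒜, ν, S) be an ergodic measure-preserving dynamical system and g ∈ L^∞(Y, ν). Then g is uniform (i.e., the Birkhoff averages (1/k)∑_{i=0}^{k-1} g∘S^i converge to ∫g dν in L^∞ norm) if and only if for every sequence (G_k) of measurable sets of positive measure, (1/k)∑_{i=0}^{k-1} (1/ν(G_k)) ∫_{G_k} g∘S^i dν → ∫ g dν as k → ∞. -/
/-!
Write `f_k = ∫ g - A_k g`, where `A_k g` is the `k`-th Birkhoff average; the spatial-temporal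
average over `G` is then `∫ g - ⨍_G f_k`. An average over a set of positive measure never exceeds
the essential supremum, which gives one direction. Conversely, `f_k ≥ ‖f_k‖∞ / 2` or
`f_k ≤ -‖f_k‖∞ / 2` on a set of positive measure, and on that set `|⨍ f_k| ≥ ‖f_k‖∞ / 2`;
taking these sets as `G_k` forces `‖f_k‖∞ → 0`.
-/

open MeasureTheory Filter Finset Topology

namespace MeasureTheory

variable {α : Type*} [MeasurableSpace α] {μ : Measure α}

theorem enorm_setAverage_le_eLpNorm_top {E : Type*} [NormedAddCommGroup E] [NormedSpace ℝ E]
    (f : α → E) (s : Set α) : ‖⨍ x in s, f x ∂μ‖ₑ ≤ eLpNorm f ⊤ μ :=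
  calc ‖⨍ x in s, f x ∂μ‖ₑ ≤ ⨍⁻ x in s, ‖f x‖ₑ ∂μ := enorm_integral_le_lintegral_enorm _
    _ ≤ essSup (‖f ·‖ₑ) μ := setLAverage_le_essSup _ _
    _ = eLpNorm f ⊤ μ := eLpNorm_exponent_top.symm

theorem le_setAverage_of_forall_le {f : α → ℝ} {s : Set α} {δ : ℝ} (hs₀ : μ s ≠ 0)
    (hs : μ s ≠ ⊤) (hf : IntegrableOn f s μ) (hδ : ∀ x ∈ s, δ ≤ f x) :
    δ ≤ ⨍ x in s, f x ∂μ :=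
  let ⟨x, hx, hfx⟩ := exists_le_setAverage hs₀ hs hf
  (hδ x hx).trans hfx

theorem setAverage_const_sub {f : α → ℝ} {s : Set α} (hs₀ : μ s ≠ 0) (hs : μ s ≠ ⊤)
    (hf : IntegrableOn f s μ) (c : ℝ) :
    ⨍ x in s, (c - f x) ∂μ = c - ⨍ x in s, f x ∂μ := by
  have hs' : μ.real s ≠ 0 := ENNReal.toReal_ne_zero.2 ⟨hs₀, hs⟩
  simp only [setAverage_eq, smul_eq_mul]
  rw [integral_sub (integrableOn_const (C := c) hs) hf, setIntegral_const, smul_eq_mul, mul_sub,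
    inv_mul_cancel_left₀ hs']

theorem exists_le_abs_setAverage_of_ofReal_lt_eLpNorm_top [IsFiniteMeasure μ] {f : α → ℝ}
    (hf : Integrable f μ) {δ : ℝ} (hδ : ENNReal.ofReal δ < eLpNorm f ⊤ μ) :
    ∃ s, MeasurableSet s ∧ 0 < μ s ∧ δ ≤ |⨍ x in s, f x ∂μ| := by
  -- Level sets of `f` itself need not be measurable; those of a measurable representative are.
  set f' := hf.aestronglyMeasurable.mk f
  have hf'm : Measurable f' := hf.aestronglyMeasurable.stronglyMeasurable_mk.measurable
  have hff' : f =ᵐ[μ] f' := hf.aestronglyMeasurable.ae_eq_mk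
  have hf'i : Integrable f' μ := hf.congr hff'
  have setAverage_mk (s : Set α) : ⨍ x in s, f x ∂μ = ⨍ x in s, f' x ∂μ :=
    average_congr (ae_restrict_of_ae hff')
  have hpos : 0 < μ {x | δ ≤ f' x} ∨ 0 < μ {x | δ ≤ -f' x} := by
    by_contra! H
    refine hδ.not_ge ?_
    rw [eLpNorm_congr_ae hff', eLpNorm_exponent_top]
    refine eLpNormEssSup_le_of_ae_bound ?_
    filter_upwards [measure_eq_zero_iff_ae_notMem.1 (nonpos_iff_eq_zero.1 H.1),
      measure_eq_zero_iff_ae_notMem.1 (nonpos_iff_eq_zero.1 H.2)] with x h₁ h₂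
    simp only [not_le] at h₁ h₂
    exact abs_le.2 ⟨by linarith, by linarith⟩
  rcases hpos with hpos | hpos
  · refine ⟨_, measurableSet_le measurable_const hf'm, hpos, ?_⟩
    rw [setAverage_mk]
    exact (le_setAverage_of_forall_le hpos.ne' (measure_ne_top _ _) hf'i.integrableOn
      fun x hx => hx).trans (le_abs_self _)
  · refine ⟨_, measurableSet_le measurable_const hf'm.neg, hpos, ?_⟩
    rw [setAverage_mk, ← abs_neg, ← average_neg]
    exact (le_setAverage_of_forall_le hpos.ne' (measure_ne_top _ _) hf'i.neg.integrableOn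
      fun x hx => hx).trans (le_abs_self _)

theorem exists_half_eLpNorm_top_le_abs_setAverage [IsFiniteMeasure μ] [NeZero μ] {f : α → ℝ}
    (hf : MemLp f ⊤ μ) :
    ∃ s, MeasurableSet s ∧ 0 < μ s ∧ (eLpNorm f ⊤ μ).toReal / 2 ≤ |⨍ x in s, f x ∂μ| := by
  rcases eq_or_ne (eLpNorm f ⊤ μ) 0 with h₀ | h₀
  · exact ⟨Set.univ, .univ, by simp [NeZero.ne μ], by simp [h₀]⟩
  refine exists_le_abs_setAverage_of_ofReal_lt_eLpNorm_top (hf.integrable le_top) ?_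
  have hpos : 0 < (eLpNorm f ⊤ μ).toReal := ENNReal.toReal_pos h₀ hf.eLpNorm_ne_top
  rw [ENNReal.ofReal_lt_iff_lt_toReal (by positivity) hf.eLpNorm_ne_top]
  linarith

theorem tendsto_eLpNorm_top_nhds_zero_iff_setAverage [IsFiniteMeasure μ] [NeZero μ]
    {ι : Type*} {l : Filter ι} {f : ι → α → ℝ} (hf : ∀ i, MemLp (f i) ⊤ μ) :
    Tendsto (fun i => eLpNorm (f i) ⊤ μ) l (𝓝 0) ↔
      ∀ G : ι → Set α, (∀ i, MeasurableSet (G i)) → (∀ i, 0 < μ (G i)) →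
        Tendsto (fun i => ⨍ x in G i, f i x ∂μ) l (𝓝 0) := by
  refine ⟨fun h G _ _ => ?_, fun h => ?_⟩
  · refine tendsto_zero_iff_enorm_tendsto_zero.2 <|
      tendsto_of_tendsto_of_tendsto_of_le_of_le tendsto_const_nhds h (fun _ => bot_le)
        fun i => enorm_setAverage_le_eLpNorm_top (f i) (G i)
  choose G hGm hGpos hG using fun i => exists_half_eLpNorm_top_le_abs_setAverage (hf i)
  have half : Tendsto (fun i => (eLpNorm (f i) ⊤ μ).toReal / 2) l (𝓝 0) :=
    squeeze_zero (fun i => by positivity) hG (by simpa using (h G hGm hGpos).abs)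
  rw [← ENNReal.tendsto_toReal_iff (fun i => (hf i).eLpNorm_ne_top) ENNReal.zero_ne_top]
  simpa [mul_div_cancel₀] using half.const_mul 2

theorem setAverage_birkhoffAverage {f : α → α} {g : α → ℝ} {s : Set α}
    (hg : ∀ i, IntegrableOn (fun x => g (f^[i] x)) s μ) (n : ℕ) :
    ⨍ x in s, birkhoffAverage ℝ f g n x ∂μ =
      (n : ℝ)⁻¹ * ∑ i ∈ range n, ⨍ x in s, g (f^[i] x) ∂μ := by
  simp only [setAverage_eq, birkhoffAverage, birkhoffSum, smul_eq_mul]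
  rw [integral_const_mul, integral_finsetSum _ fun i _ => hg i, mul_left_comm, Finset.mul_sum]

theorem MemLp.birkhoffAverage {f : α → α} {g : α → ℝ} {p : ENNReal} (hg : MemLp g p μ)
    (hf : MeasurePreserving f μ μ) (n : ℕ) : MemLp (_root_.birkhoffAverage ℝ f g n) p μ :=
  (memLp_finsetSum (range n) fun i _ => hg.comp_measurePreserving (hf.iterate i)).const_mul _

end MeasureTheory

/-- Theorem 1 (characterization of uniform functions via spatial-temporal
differentiations): `g ∈ L^∞` is uniform iff for every sequence of measurable
sets of positive measure the spatial-temporal averages converge to `∫ g`. -/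
theorem uniform_iff_spatial_temporal
    {Y : Type*} [MeasurableSpace Y] (ν : Measure Y) [IsProbabilityMeasure ν]
    (S : Y → Y) (hS : Ergodic S ν) (g : Y → ℝ) (hg : MemLp g ⊤ ν) :
    Tendsto (fun k : ℕ =>
        eLpNorm (fun y => (∫ z, g z ∂ν) - (k : ℝ)⁻¹ * ∑ i ∈ range k, g (S^[i] y)) ⊤ ν)
      atTop (𝓝 0) ↔
    ∀ G : ℕ → Set Y, (∀ k, MeasurableSet (G k)) → (∀ k, 0 < ν (G k)) →
      Tendsto (fun k : ℕ =>
          (k : ℝ)⁻¹ * ∑ i ∈ range k, (ν (G k)).toReal⁻¹ * ∫ y in G k, g (S^[i] y) ∂ν)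
        atTop (𝓝 (∫ z, g z ∂ν)) := by
  set c := ∫ z, g z ∂ν
  have hB k : MemLp (birkhoffAverage ℝ S g k) ⊤ ν := hg.birkhoffAverage hS.toMeasurePreserving k
  have hgSi i : Integrable (fun y => g (S^[i] y)) ν :=
    (hg.comp_measurePreserving (hS.toMeasurePreserving.iterate i)).integrable le_top
  have spatialTemporal_eq {G : Set Y} (hG : 0 < ν G) (k : ℕ) :
      (k : ℝ)⁻¹ * ∑ i ∈ range k, (ν G).toReal⁻¹ * ∫ y in G, g (S^[i] y) ∂ν =
        c - ⨍ y in G, (c - birkhoffAverage ℝ S g k y) ∂ν := by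
    rw [setAverage_const_sub hG.ne' (measure_ne_top _ _) ((hB k).integrable le_top).integrableOn,
      setAverage_birkhoffAverage fun i => (hgSi i).integrableOn, sub_sub_cancel]
    simp only [setAverage_eq, measureReal_def, smul_eq_mul]
  refine (tendsto_eLpNorm_top_nhds_zero_iff_setAverage fun k => (memLp_const c).sub (hB k)).trans
    (forall₃_congr fun G _ hG => ?_)
  simp only [spatialTemporal_eq (hG _)]
  simpa using (tendsto_const_sub_iff c (c := 0)).symm
end

section
/- Let X be a compact metric space with Borel σ-algebra 𝓑, T : X → X a homeomorphism, and μ a strictly positive T-invariant Borel probability measure. If f ∈ C(X) is nonnegative and real-valued, then Γ(f) = ∫ f dμ_f, where μ_f is an f-maximizing T-invariant measure. -/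
/-!
Because `μ` charges every open set, the `L^∞(μ)` norm of the continuous Birkhoff average `A_k f`
is its maximum, attained at some point `x_k`; so `Γ = lim A_k f (x_k)`. Integrating `A_k f`
against the invariant measure `ν` gives `∫ f dν ≤ A_k f (x_k)`, hence `∫ f dν ≤ Γ`. Conversely
(Krylov–Bogolyubov), a weak-* limit point `ρ` of the empirical measures
`(1/k) ∑_{i<k} δ_{T^i x_k}` is `T`-invariant and `∫ f dρ = Γ`, so `Γ ≤ ∫ f dν` by maximality.
-/

open MeasureTheory Filter Finset Topology
open scoped ENNReal BoundedContinuousFunction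

section EssSup

variable {α : Type*} [TopologicalSpace α] [MeasurableSpace α] {μ : Measure α}
  [μ.IsOpenPosMeasure]

theorem LowerSemicontinuous.essSup_eq_iSup {β : Type*} [CompleteLinearOrder β] {f : α → β}
    (hf : LowerSemicontinuous f) : essSup f μ = ⨆ x, f x :=
  (iSup_eq_essSup fun _ _ ha ↦ (hf.isOpen_preimage _).measure_ne_zero μ ⟨_, ha⟩).symm

theorem Continuous.eLpNorm_top_eq_iSup {E : Type*} [NormedAddCommGroup E] {g : α → E}
    (hg : Continuous g) : eLpNorm g ⊤ μ = ⨆ x, ‖g x‖ₑ := by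
  rw [eLpNorm_exponent_top, eLpNormEssSup]
  exact (continuous_enorm.comp hg).lowerSemicontinuous.essSup_eq_iSup

theorem Continuous.toReal_eLpNorm_top_of_forall_le {g : α → ℝ} (hg : Continuous g)
    (hg0 : 0 ≤ g) {x₀ : α} (hx₀ : ∀ x, g x ≤ g x₀) : (eLpNorm g ⊤ μ).toReal = g x₀ := by
  have hsup : ⨆ x, ‖g x‖ₑ = ‖g x₀‖ₑ := by
    refine le_antisymm (iSup_le fun x ↦ ?_) (le_iSup (fun x ↦ ‖g x‖ₑ) x₀)
    simp only [Real.enorm_eq_ofReal (hg0 _)]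
    exact ENNReal.ofReal_le_ofReal (hx₀ x)
  rw [hg.eLpNorm_top_eq_iSup, hsup, toReal_enorm, Real.norm_of_nonneg (hg0 x₀)]

end EssSup

section Birkhoff

theorem birkhoffAverage_comp_apply {α M : Type*} [AddCommMonoid M] [Module ℝ M] (f : α → α)
    (g : α → M) (n : ℕ) (x : α) :
    birkhoffAverage ℝ f (g ∘ f) n x = birkhoffAverage ℝ f g n (f x) := by
  simp only [birkhoffAverage, birkhoffSum, Function.comp_apply, ← Function.iterate_succ_apply',
    Function.iterate_succ_apply]

theorem tendsto_birkhoffAverage_apply_sub_birkhoffAverage_of_isBounded {α E : Type*}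
    (𝕜 : Type*) [RCLike 𝕜] [NormedAddCommGroup E] [NormedSpace 𝕜 E] {g : α → E}
    (h : Bornology.IsBounded (Set.range g)) (f : α → α) (x : ℕ → α) :
    Tendsto (fun n ↦ birkhoffAverage 𝕜 f g n (f (x n)) - birkhoffAverage 𝕜 f g n (x n))
      atTop (𝓝 0) := by
  rcases Metric.isBounded_range_iff.1 h with ⟨C, hC⟩
  refine squeeze_zero_norm (fun n ↦ ?_)
    (tendsto_const_nhds.div_atTop tendsto_natCast_atTop_atTop : Tendsto (fun n : ℕ ↦ C / n) _ _)
  rw [← dist_eq_norm, dist_birkhoffAverage_apply_birkhoffAverage]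
  gcongr
  exact hC _ _

theorem MeasureTheory.MeasurePreserving.integral_birkhoffAverage {α : Type*}
    [MeasurableSpace α] {μ : Measure α} {T : α → α} (hT : MeasurePreserving T μ μ)
    {g : α → ℝ} (hg : Integrable g μ) {n : ℕ} (hn : n ≠ 0) :
    ∫ x, birkhoffAverage ℝ T g n x ∂μ = ∫ x, g x ∂μ := by
  have hint (i : ℕ) : Integrable (fun x ↦ g (T^[i] x)) μ :=
    (hT.iterate i).integrable_comp_of_integrable hg
  have hiter (i : ℕ) : ∫ x, g (T^[i] x) ∂μ = ∫ x, g x ∂μ := by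
    have hi := hT.iterate i
    rw [← integral_map hi.aemeasurable (by rw [hi.map_eq]; exact hg.aestronglyMeasurable),
      hi.map_eq]
  simp only [birkhoffAverage, birkhoffSum, smul_eq_mul]
  rw [integral_const_mul, integral_finsetSum _ fun i _ ↦ hint i]
  simp [hiter, hn]

end Birkhoff

section Empirical

variable {α : Type*} [MeasurableSpace α] (T : α → α) (x : α)

noncomputable def empiricalMeasure (n : ℕ) : Measure α :=
  (n : ℝ≥0∞)⁻¹ • ∑ i ∈ range n, Measure.dirac (T^[i] x)

instance isProbabilityMeasure_empiricalMeasure (n : ℕ) [NeZero n] :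
    IsProbabilityMeasure (empiricalMeasure T x n) := by
  constructor
  simp [empiricalMeasure, ENNReal.inv_mul_cancel (NeZero.ne (n : ℝ≥0∞))]

theorem integral_empiricalMeasure [MeasurableSingletonClass α] (g : α → ℝ) (n : ℕ) :
    ∫ y, g y ∂empiricalMeasure T x n = birkhoffAverage ℝ T g n x := by
  rw [empiricalMeasure, integral_smul_measure, integral_finsetSum_measure
    fun i _ ↦ integrable_dirac enorm_lt_top]
  simp [birkhoffAverage, birkhoffSum, integral_dirac]

end Empirical

theorem exists_measurePreserving_integral_eq_of_tendsto_birkhoffAverage {X : Type*}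
    [TopologicalSpace X] [T2Space X] [CompactSpace X] [HasOuterApproxClosed X]
    [MeasurableSpace X] [BorelSpace X] {T : X → X} (hT : Continuous T) (g : C(X, ℝ))
    {x : ℕ → X} {c : ℝ} (hc : Tendsto (fun n ↦ birkhoffAverage ℝ T g n (x n)) atTop (𝓝 c)) :
    ∃ ρ : Measure X, IsProbabilityMeasure ρ ∧ MeasurePreserving T ρ ρ ∧ ∫ y, g y ∂ρ = c := by
  -- The index is shifted by one so that every empirical measure has mass one.
  let P (n : ℕ) : ProbabilityMeasure X := ⟨empiricalMeasure T (x (n + 1)) (n + 1), inferInstance⟩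
  let 𝒰 := Ultrafilter.of (atTop : Filter ℕ)
  have h𝒰 : ↑𝒰 ≤ (atTop : Filter ℕ) := Ultrafilter.of_le _
  obtain ⟨ρ, -, hρ⟩ := isCompact_univ.ultrafilter_le_nhds (𝒰.map P) (by simp)
  have hlim (h : X →ᵇ ℝ) : Tendsto (fun n ↦ birkhoffAverage ℝ T h (n + 1) (x (n + 1))) 𝒰
      (𝓝 (∫ y, h y ∂ρ)) := by
    simpa [P, integral_empiricalMeasure] using
      ProbabilityMeasure.tendsto_iff_forall_integral_tendsto.1 hρ h
  have hshift {u : ℕ → ℝ} {a : ℝ} (hu : Tendsto u atTop (𝓝 a)) :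
      Tendsto (fun n ↦ u (n + 1)) 𝒰 (𝓝 a) :=
    ((tendsto_add_atTop_iff_nat 1).2 hu).mono_left h𝒰
  refine ⟨ρ, inferInstance, ⟨hT.measurable, ?_⟩, ?_⟩
  · refine ext_of_forall_integral_eq_of_IsFiniteMeasure fun h ↦ ?_
    rw [integral_map hT.aemeasurable h.continuous.aestronglyMeasurable]
    refine tendsto_nhds_unique (hlim (h.compContinuous ⟨T, hT⟩)) ?_
    simpa [birkhoffAverage_comp_apply] using (hlim h).add
      (hshift (tendsto_birkhoffAverage_apply_sub_birkhoffAverage_of_isBounded ℝ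
        h.isBounded_range T x))
  · exact tendsto_nhds_unique (hlim (.mkOfCompact g)) (hshift hc)

theorem gauge_eq_maximizing_integral_general
    {X : Type*} [MetricSpace X] [CompactSpace X] [MeasurableSpace X] [BorelSpace X]
    (μ : Measure X) [μ.IsOpenPosMeasure]
    (T : X ≃ₜ X)
    (f : C(X, ℝ)) (hf0 : ∀ x, 0 ≤ f x)
    (ν : Measure X) [IsProbabilityMeasure ν] (hν : MeasurePreserving (⇑T) ν ν)
    (hmax : ∀ ν' : Measure X, IsProbabilityMeasure ν' → MeasurePreserving (⇑T) ν' ν' →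
      ∫ x, f x ∂ν' ≤ ∫ x, f x ∂ν)
    (Γ : ℝ)
    (hΓ : Tendsto (fun k : ℕ =>
        (eLpNorm (fun x => (k : ℝ)⁻¹ * ∑ i ∈ range k, f ((⇑T)^[i] x)) ⊤ μ).toReal)
      atTop (𝓝 Γ)) :
    Γ = ∫ x, f x ∂ν := by
  have : Nonempty X := ν.nonempty_of_neZero
  have hA (k : ℕ) : Continuous (birkhoffAverage ℝ T f k) := by
    unfold birkhoffAverage birkhoffSum; fun_prop
  have hA0 (k : ℕ) : 0 ≤ birkhoffAverage ℝ T f k :=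
    fun y ↦ smul_nonneg (by positivity) (sum_nonneg fun i _ ↦ hf0 _)
  choose x hx using fun k ↦ isCompact_univ.exists_isMaxOn Set.univ_nonempty (hA k).continuousOn
  have hs : Tendsto (fun k ↦ birkhoffAverage ℝ T f k (x k)) atTop (𝓝 Γ) :=
    hΓ.congr fun k ↦ (hA k).toReal_eLpNorm_top_of_forall_le (hA0 k) fun y ↦ (hx k).2 trivial
  obtain ⟨ρ, hρ, hρT, hρf⟩ :=
    exists_measurePreserving_integral_eq_of_tendsto_birkhoffAverage T.continuous f hs
  refine le_antisymm (hρf ▸ hmax ρ hρ hρT) (ge_of_tendsto hs ?_)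
  filter_upwards [eventually_ne_atTop 0] with k hk
  calc ∫ y, f y ∂ν = ∫ y, birkhoffAverage ℝ T f k y ∂ν :=
        (hν.integral_birkhoffAverage (f.continuous.integrable_of_hasCompactSupport
          (.of_compactSpace _)) hk).symm
    _ ≤ ∫ _, birkhoffAverage ℝ T f k (x k) ∂ν :=
        integral_mono ((hA k).integrable_of_hasCompactSupport (.of_compactSpace _))
          (integrable_const _) fun y ↦ (hx k).2 trivial
    _ = birkhoffAverage ℝ T f k (x k) := by simp

/-- Lemma (gauge equals maximizing integral): for a strictly positive invariant
Borel probability measure `μ` on a compact metric space and a nonnegative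
continuous `f`, the gauge `Γ(f)` equals `∫ f dν` for any `f`-maximizing
`T`-invariant Borel probability measure `ν`. -/
theorem gauge_eq_maximizing_integral
    {X : Type*} [MetricSpace X] [CompactSpace X] [MeasurableSpace X] [BorelSpace X]
    (μ : Measure X) [IsProbabilityMeasure μ] [μ.IsOpenPosMeasure]
    (T : X ≃ₜ X) (hT : MeasurePreserving (⇑T) μ μ)
    (f : C(X, ℝ)) (hf0 : ∀ x, 0 ≤ f x)
    (ν : Measure X) [IsProbabilityMeasure ν] (hν : MeasurePreserving (⇑T) ν ν)
    (hmax : ∀ ν' : Measure X, IsProbabilityMeasure ν' → MeasurePreserving (⇑T) ν' ν' →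
      ∫ x, f x ∂ν' ≤ ∫ x, f x ∂ν)
    (Γ : ℝ)
    (hΓ : Tendsto (fun k : ℕ =>
        (eLpNorm (fun x => (k : ℝ)⁻¹ * ∑ i ∈ range k, f ((⇑T)^[i] x)) ⊤ μ).toReal)
      atTop (𝓝 Γ)) :
    Γ = ∫ x, f x ∂ν :=
  gauge_eq_maximizing_integral_general μ T f hf0 ν hν hmax Γ hΓ
end

section
/- Let X be a compact connected metric space, T : X → X a homeomorphism, and μ a strictly positive T-invariant ergodic Borel probability measure such that (X, T) is not uniquely ergodic. Then there exists a sequence (U_k) of nonempty open subsets of X of positive measure and a nonnegative f ∈ C(X) such that the sequence ((1/μ(U_k)) ∫_{U_k} (1/k)∑_{i=0}^{k-1} f∘T^i dμ)_k is not Cauchy. -/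
open MeasureTheory Filter Finset Topology
open scoped BoundedContinuousFunction ENNReal

/-!
If `(X, T)` is not uniquely ergodic, there is a second invariant probability measure `ν ≠ μ`,
and a nonnegative continuous `f` with `∫ f dμ < ∫ f dν`. Every Birkhoff average `A_k f` has
`μ`-integral `∫ f dμ` and `ν`-integral `∫ f dν`, so `A_k f` takes values below
`∫ f dμ + ε` and above `∫ f dν - ε` on nonempty open sets. Averaging `A_k f` over a set of the
first kind for even `k` and of the second kind for odd `k` gives a sequence oscillating between
two separated values.
-/

theorem Continuous.birkhoffSum {α M : Type*} [TopologicalSpace α] [AddCommMonoid M]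
    [TopologicalSpace M] [ContinuousAdd M] {T : α → α} {g : α → M} (hT : Continuous T)
    (hg : Continuous g) (n : ℕ) : Continuous (birkhoffSum T g n) :=
  continuous_finsetSum _ fun i _ => hg.comp (hT.iterate i)

theorem Continuous.birkhoffAverage (R : Type*) {α M : Type*} [DivisionSemiring R]
    [TopologicalSpace α] [AddCommMonoid M] [TopologicalSpace M] [ContinuousAdd M] [Module R M]
    [ContinuousConstSMul R M] {T : α → α} {g : α → M} (hT : Continuous T) (hg : Continuous g)
    (n : ℕ) : Continuous (birkhoffAverage R T g n) :=
  (hT.birkhoffSum hg n).const_smul _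

namespace MeasureTheory.MeasurePreserving

variable {α E : Type*} [MeasurableSpace α] [NormedAddCommGroup E] [NormedSpace ℝ E]
  {μ : Measure α} {T : α → α} {g : α → E}

theorem integral_birkhoffSum (hT : MeasurePreserving T μ μ) (hg : Integrable g μ) (n : ℕ) :
    ∫ x, birkhoffSum T g n x ∂μ = n • ∫ x, g x ∂μ := by
  have integral_comp_iterate (i : ℕ) : ∫ x, g (T^[i] x) ∂μ = ∫ x, g x ∂μ := by
    have hTi := hT.iterate i
    rw [← hTi.map_eq] at hg
    rw [← integral_map hTi.aemeasurable hg.aestronglyMeasurable, hTi.map_eq]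
  have integrable_comp_iterate (i : ℕ) : Integrable (fun x => g (T^[i] x)) μ :=
    ((hT.iterate i).integrable_comp hg.aestronglyMeasurable).2 hg
  simp only [birkhoffSum]
  rw [integral_finsetSum _ fun i _ => integrable_comp_iterate i]
  simp [integral_comp_iterate]

theorem integral_birkhoffAverage_s7 (hT : MeasurePreserving T μ μ) (hg : Integrable g μ) {n : ℕ}
    (hn : n ≠ 0) : ∫ x, birkhoffAverage ℝ T g n x ∂μ = ∫ x, g x ∂μ := by
  simp only [birkhoffAverage]
  rw [integral_smul, hT.integral_birkhoffSum hg, ← Nat.cast_smul_eq_nsmul ℝ,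
    inv_smul_smul₀ (Nat.cast_ne_zero.2 hn)]

end MeasureTheory.MeasurePreserving

section SeparatingFunction

variable {X : Type*} [TopologicalSpace X] [HasOuterApproxClosed X] [MeasurableSpace X]
  [BorelSpace X] {μ ν : Measure X}

theorem exists_boundedContinuousFunction_integral_lt_of_ne [IsFiniteMeasure μ]
    [IsFiniteMeasure ν] (hμν : μ ≠ ν) : ∃ g : X →ᵇ ℝ, ∫ x, g x ∂μ < ∫ x, g x ∂ν := by
  obtain ⟨g, hg⟩ : ∃ g : X →ᵇ ℝ, ∫ x, g x ∂μ ≠ ∫ x, g x ∂ν := by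
    by_contra! h
    exact hμν (ext_of_forall_integral_eq_of_IsFiniteMeasure h)
  rcases hg.lt_or_gt with hlt | hgt
  · exact ⟨g, hlt⟩
  · exact ⟨-g, by simpa [integral_neg] using hgt⟩

theorem exists_nonneg_boundedContinuousFunction_integral_lt_of_ne [IsProbabilityMeasure μ]
    [IsProbabilityMeasure ν] (hμν : μ ≠ ν) :
    ∃ f : X →ᵇ ℝ, 0 ≤ f ∧ ∫ x, f x ∂μ < ∫ x, f x ∂ν := by
  obtain ⟨g, hg⟩ := exists_boundedContinuousFunction_integral_lt_of_ne hμν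
  have integral_add_const (κ : Measure X) [IsProbabilityMeasure κ] :
      ∫ x, (g x + ‖g‖) ∂κ = ∫ x, g x ∂κ + ‖g‖ := by
    simp [integral_add (g.integrable κ) (integrable_const ‖g‖)]
  refine ⟨g + BoundedContinuousFunction.const X ‖g‖, fun x => ?_, ?_⟩
  · simpa [neg_le_iff_add_nonneg] using g.neg_norm_le_apply x
  · simpa [integral_add_const] using hg

end SeparatingFunction

theorem setAverage_le_of_forall_mem_le {α : Type*} [MeasurableSpace α] {μ : Measure α}
    {s : Set α} {f : α → ℝ} {t : ℝ} (hs₀ : μ s ≠ 0) (hs : μ s ≠ ∞)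
    (hf : IntegrableOn f s μ) (h : ∀ x ∈ s, f x ≤ t) : ⨍ x in s, f x ∂μ ≤ t := by
  obtain ⟨x, hxs, hx⟩ := exists_setAverage_le hs₀ hs hf
  exact hx.trans (h x hxs)

theorem not_cauchySeq_of_frequently_le_of_frequently_ge {s : ℕ → ℝ} {a b : ℝ} (hab : a < b)
    (ha : ∃ᶠ n in atTop, s n ≤ a) (hb : ∃ᶠ n in atTop, b ≤ s n) : ¬ CauchySeq s := by
  intro hs
  obtain ⟨L, hL⟩ := cauchySeq_tendsto_of_complete hs
  exact hab.not_ge <|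
    (ge_of_tendsto_of_frequently hL hb).trans (le_of_tendsto_of_frequently hL ha)

section OscillatingAverages

variable {X : Type*} [TopologicalSpace X] [CompactSpace X] [MeasurableSpace X] [BorelSpace X]
  (μ : Measure X) [IsFiniteMeasure μ] [μ.IsOpenPosMeasure] {F : X → ℝ}

theorem exists_isOpen_setAverage_le_integral_add (hF : Continuous F) (κ : Measure X)
    [IsProbabilityMeasure κ] {ε : ℝ} (hε : 0 < ε) :
    ∃ U : Set X, IsOpen U ∧ U.Nonempty ∧ ⨍ x in U, F x ∂μ ≤ ∫ x, F x ∂κ + ε := by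
  have hFint (ρ : Measure X) [IsFiniteMeasure ρ] : Integrable F ρ :=
    hF.integrable_of_hasCompactSupport (HasCompactSupport.of_compactSpace _)
  obtain ⟨x, hx⟩ := exists_le_integral (hFint κ)
  have hU : IsOpen {x | F x < ∫ x, F x ∂κ + ε} := isOpen_lt hF continuous_const
  have hUne : {x | F x < ∫ x, F x ∂κ + ε}.Nonempty := ⟨x, show F x < _ by linarith⟩
  exact ⟨_, hU, hUne, setAverage_le_of_forall_mem_le (hU.measure_ne_zero μ hUne)
    (measure_ne_top μ _) (hFint μ).integrableOn fun x hx => le_of_lt hx⟩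

theorem exists_isOpen_integral_sub_le_setAverage (hF : Continuous F) (κ : Measure X)
    [IsProbabilityMeasure κ] {ε : ℝ} (hε : 0 < ε) :
    ∃ U : Set X, IsOpen U ∧ U.Nonempty ∧ ∫ x, F x ∂κ - ε ≤ ⨍ x in U, F x ∂μ := by
  obtain ⟨U, hUo, hUne, hU⟩ := exists_isOpen_setAverage_le_integral_add μ hF.neg κ hε
  refine ⟨U, hUo, hUne, ?_⟩
  simp only [Pi.neg_apply, integral_neg, average_neg] at hU
  linarith

end OscillatingAverages

theorem pathological_connected_differentiation_general
    {X : Type*} [MetricSpace X] [CompactSpace X]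
    [MeasurableSpace X] [BorelSpace X]
    (μ : Measure X) [IsProbabilityMeasure μ] [μ.IsOpenPosMeasure]
    (T : X ≃ₜ X) (hErg : Ergodic (⇑T) μ)
    (hNUE : ¬ ∀ ν : Measure X, IsProbabilityMeasure ν → MeasurePreserving (⇑T) ν ν → ν = μ) :
    ∃ (U : ℕ → Set X) (f : C(X, ℝ)),
      (∀ k, IsOpen (U k)) ∧ (∀ k, (U k).Nonempty) ∧ (∀ k, 0 < μ (U k)) ∧
      (∀ x, 0 ≤ f x) ∧
      ¬ CauchySeq (fun k : ℕ => (μ (U k)).toReal⁻¹ *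
          ∫ x in U k, (k : ℝ)⁻¹ * ∑ i ∈ range k, f ((⇑T)^[i] x) ∂μ) := by
  push Not at hNUE
  obtain ⟨ν, hν, hνT, hνμ⟩ := hNUE
  obtain ⟨f, hf₀, hlt⟩ := exists_nonneg_boundedContinuousFunction_integral_lt_of_ne hνμ.symm
  obtain ⟨ε, hε₀, hε⟩ : ∃ ε > 0, ∫ x, f x ∂μ + ε < ∫ x, f x ∂ν - ε :=
    ⟨(∫ x, f x ∂ν - ∫ x, f x ∂μ) / 3, by linarith, by linarith⟩
  set F : ℕ → X → ℝ := birkhoffAverage ℝ T f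
  have hF (k : ℕ) : Continuous (F k) := T.continuous.birkhoffAverage ℝ f.continuous k
  -- Thresholds use `∫ F k` rather than `∫ f`, so `k = 0` (where `F 0 = 0`) is no exception.
  have hsets (k : ℕ) : ∃ U : Set X, IsOpen U ∧ U.Nonempty ∧
      (Even k → ⨍ x in U, F k x ∂μ ≤ ∫ x, F k x ∂μ + ε) ∧
      (¬ Even k → ∫ x, F k x ∂ν - ε ≤ ⨍ x in U, F k x ∂μ) := by
    by_cases hk : Even k
    · obtain ⟨U, hUo, hUne, hU⟩ := exists_isOpen_setAverage_le_integral_add μ (hF k) μ hε₀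
      exact ⟨U, hUo, hUne, fun _ => hU, absurd hk⟩
    · obtain ⟨U, hUo, hUne, hU⟩ := exists_isOpen_integral_sub_le_setAverage μ (hF k) ν hε₀
      exact ⟨U, hUo, hUne, (absurd · hk), fun _ => hU⟩
  choose U hUo hUne hUeven hUodd using hsets
  refine ⟨U, f.toContinuousMap, hUo, hUne, fun k => (hUo k).measure_pos μ (hUne k), hf₀, ?_⟩
  suffices ¬ CauchySeq fun k => ⨍ x in U k, F k x ∂μ by
    convert this using 3 with k
    rw [setAverage_eq, smul_eq_mul, measureReal_def]
    rfl
  refine not_cauchySeq_of_frequently_le_of_frequently_ge hε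
    (frequently_atTop.2 fun N => ⟨2 * N + 2, by omega, ?_⟩)
    (frequently_atTop.2 fun N => ⟨2 * N + 1, by omega, ?_⟩)
  · simpa [F, hErg.toMeasurePreserving.integral_birkhoffAverage_s7 (f.integrable _)] using
      hUeven (2 * N + 2) (by simp [parity_simps])
  · simpa [F, hνT.integral_birkhoffAverage_s7 (f.integrable _)] using
      hUodd (2 * N + 1) (by simp [parity_simps])

/-- Pathological differentiation on a connected space: if `μ` is strictly
positive but `(X, T)` is not uniquely ergodic, there exist nonempty open sets
`U_k` of positive measure and a nonnegative continuous `f` whose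
spatial-temporal differentiation sequence is not Cauchy. -/
theorem pathological_connected_differentiation
    {X : Type*} [MetricSpace X] [CompactSpace X] [ConnectedSpace X]
    [MeasurableSpace X] [BorelSpace X]
    (μ : Measure X) [IsProbabilityMeasure μ] [μ.IsOpenPosMeasure]
    (T : X ≃ₜ X) (hErg : Ergodic (⇑T) μ)
    (hNUE : ¬ ∀ ν : Measure X, IsProbabilityMeasure ν → MeasurePreserving (⇑T) ν ν → ν = μ) :
    ∃ (U : ℕ → Set X) (f : C(X, ℝ)),
      (∀ k, IsOpen (U k)) ∧ (∀ k, (U k).Nonempty) ∧ (∀ k, 0 < μ (U k)) ∧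
      (∀ x, 0 ≤ f x) ∧
      ¬ CauchySeq (fun k : ℕ => (μ (U k)).toReal⁻¹ *
          ∫ x in U k, (k : ℝ)⁻¹ * ∑ i ∈ range k, f ((⇑T)^[i] x) ∂μ) :=
  pathological_connected_differentiation_general μ T hErg hNUE
end

section
/- Let X = (X, ρ) be a compact metric space, T : X → X a 1-Lipschitz homeomorphism, μ a T-invariant ergodic Borel probability measure, and 𝓔 = {E_d}_{d ∈ 𝒟} a finite measurable partition generating the Borel σ-algebra under T. Let C_k(x) denote the element of ⋁_{i=0}^{k-1} T^{-i}𝓔 containing x. Suppose diam(C_k(x)) → 0 for μ-almost all x. Then for μ-almost every x ∈ X, (1/μ(C_k(x))) ∫_{C_k(x)} (1/k)∑_{i=0}^{k-1} f∘T^i dμ → ∫ f dμ for all f ∈ C(X). -/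
/-!
Birkhoff's pointwise ergodic theorem, proved from the maximal ergodic theorem, gives almost sure
convergence of the Birkhoff averages `A_k f` for a countable dense family of continuous `f`, hence
for all of them because `f ↦ A_k f x` is `1`-Lipschitz. Since `T` is `1`-Lipschitz, the functions
`A_k f` are uniformly equicontinuous, so their mean over `C_k(x)` is close to `A_k f x` as soon as
`diam C_k(x)` is small. For fixed `k` there are only finitely many cylinders, so almost every `x`
lies in cylinders of positive measure only.
-/

open MeasureTheory Filter Finset Topology Set Metric

section MaxBirkhoffSum

variable {α : Type*} (T : α → α) (g : α → ℝ)

noncomputable def maxBirkhoffSum : ℕ → α → ℝ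
  | 0 => 0
  | N + 1 => fun x => max (maxBirkhoffSum N x) (birkhoffSum T g (N + 1) x)

variable {T g}

theorem maxBirkhoffSum_nonneg (N : ℕ) (x : α) : 0 ≤ maxBirkhoffSum T g N x := by
  induction N with
  | zero => exact le_rfl
  | succ N ih => exact le_max_of_le_left ih

theorem monotone_maxBirkhoffSum (x : α) : Monotone (maxBirkhoffSum T g · x) :=
  monotone_nat_of_le_succ fun _ => le_max_left _ _

theorem birkhoffSum_le_maxBirkhoffSum {n N : ℕ} (h : n ≤ N) (x : α) :
    birkhoffSum T g n x ≤ maxBirkhoffSum T g N x := by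
  refine le_trans ?_ (monotone_maxBirkhoffSum x h)
  cases n with
  | zero => exact (birkhoffSum_zero T g x).trans_le (maxBirkhoffSum_nonneg 0 x)
  | succ n => exact le_max_right _ _

theorem maxBirkhoffSum_le_add_maxBirkhoffSum_apply {N : ℕ} {x : α}
    (h : 0 < maxBirkhoffSum T g N x) :
    maxBirkhoffSum T g N x ≤ g x + maxBirkhoffSum T g N (T x) := by
  induction N with
  | zero => exact absurd h (lt_irrefl 0)
  | succ N ih =>
    have hsucc : birkhoffSum T g (N + 1) x ≤ g x + maxBirkhoffSum T g (N + 1) (T x) := by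
      rw [birkhoffSum_succ']
      gcongr
      exact birkhoffSum_le_maxBirkhoffSum N.le_succ (T x)
    refine max_le ?_ hsucc
    rcases lt_or_ge 0 (maxBirkhoffSum T g N x) with hpos | hnonpos
    · exact (ih hpos).trans (by gcongr; exact monotone_maxBirkhoffSum (T x) N.le_succ)
    · have hsum : 0 < birkhoffSum T g (N + 1) x := (lt_max_iff.1 h).resolve_left hnonpos.not_gt
      exact hnonpos.trans (hsum.le.trans hsucc)

end MaxBirkhoffSum

section MaximalErgodic

variable {α : Type*} [MeasurableSpace α] {μ : Measure α} {T : α → α} {g : α → ℝ}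

theorem measurable_birkhoffSum (hT : Measurable T) (hg : Measurable g) (n : ℕ) :
    Measurable (birkhoffSum T g n) :=
  Finset.measurable_sum _ fun k _ => hg.comp (hT.iterate k)

theorem measurable_maxBirkhoffSum (hT : Measurable T) (hg : Measurable g) (N : ℕ) :
    Measurable (maxBirkhoffSum T g N) := by
  induction N with
  | zero => exact measurable_const
  | succ N ih => exact ih.max (measurable_birkhoffSum hT hg _)

theorem MeasureTheory.MeasurePreserving.integrable_birkhoffSum (hT : MeasurePreserving T μ μ)
    (hg : Integrable g μ) (n : ℕ) : Integrable (birkhoffSum T g n) μ :=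
  integrable_finsetSum _ fun k _ => (hT.iterate k).integrable_comp_of_integrable hg

theorem MeasureTheory.MeasurePreserving.integrable_maxBirkhoffSum (hT : MeasurePreserving T μ μ)
    (hg : Integrable g μ) (N : ℕ) : Integrable (maxBirkhoffSum T g N) μ := by
  induction N with
  | zero => exact integrable_zero _ _ _
  | succ N ih => exact ih.sup (hT.integrable_birkhoffSum hg _)

/-- The maximal ergodic theorem. Writing `M = maxBirkhoffSum T g N`, on `{M > 0}` we have
`g ≥ M - M ∘ T`, and `M - M ∘ T` integrates to a nonnegative number over `{M > 0}` because
`M ≥ 0` vanishes off this set and `M ∘ T` has the same integral as `M`. -/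
theorem MeasureTheory.MeasurePreserving.setIntegral_maxBirkhoffSum_pos_nonneg
    (hT : MeasurePreserving T μ μ) (hgm : Measurable g) (hg : Integrable g μ) (N : ℕ) :
    0 ≤ ∫ x in {x | 0 < maxBirkhoffSum T g N x}, g x ∂μ := by
  set M := maxBirkhoffSum T g N
  set P := {x | 0 < M x}
  have hM : Integrable M μ := hT.integrable_maxBirkhoffSum hg N
  have hMT : Integrable (M ∘ T) μ := hT.integrable_comp_of_integrable hM
  have hP : MeasurableSet P :=
    measurableSet_lt measurable_const (measurable_maxBirkhoffSum hT.measurable hgm N)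
  have hcomp : ∫ x, M (T x) ∂μ = ∫ x, M x ∂μ := by
    rw [← integral_map hT.aemeasurable (by rw [hT.map_eq]; exact hM.aestronglyMeasurable),
      hT.map_eq]
  have hMP : ∫ x in P, M x ∂μ = ∫ x, M x ∂μ :=
    setIntegral_eq_integral_of_forall_compl_eq_zero fun x hx =>
      le_antisymm (not_lt.1 hx) (maxBirkhoffSum_nonneg N x)
  have hMTP : ∫ x in P, M (T x) ∂μ ≤ ∫ x, M (T x) ∂μ :=
    setIntegral_le_integral hMT (.of_forall fun x => maxBirkhoffSum_nonneg N (T x))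
  calc 0 = ∫ x in P, M x ∂μ - ∫ x, M (T x) ∂μ := by rw [hMP, hcomp, sub_self]
    _ ≤ ∫ x in P, M x ∂μ - ∫ x in P, M (T x) ∂μ := by gcongr
    _ = ∫ x in P, (M x - M (T x)) ∂μ := (integral_sub hM.integrableOn hMT.integrableOn).symm
    _ ≤ ∫ x in P, g x ∂μ := setIntegral_mono_on (hM.sub hMT).integrableOn hg.integrableOn hP
        fun x hx => by linarith [maxBirkhoffSum_le_add_maxBirkhoffSum_apply (T := T) (g := g) hx]

theorem MeasureTheory.MeasurePreserving.integral_nonneg_of_ae_exists_birkhoffSum_pos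
    (hT : MeasurePreserving T μ μ) (hgm : Measurable g) (hg : Integrable g μ)
    (hpos : ∀ᵐ x ∂μ, ∃ n, 0 < birkhoffSum T g n x) : 0 ≤ ∫ x, g x ∂μ := by
  set P : ℕ → Set α := fun N => {x | 0 < maxBirkhoffSum T g N x}
  have hPm : ∀ N, MeasurableSet (P N) := fun N =>
    measurableSet_lt measurable_const (measurable_maxBirkhoffSum hT.measurable hgm N)
  have hPmono : Monotone P := fun N N' h x hx => hx.trans_le (monotone_maxBirkhoffSum x h)
  have hPuniv : ⋃ N, P N =ᵐ[μ] univ := by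
    refine ae_eq_univ.2 <| ae_iff.1 <| hpos.mono fun x ⟨n, hn⟩ => mem_iUnion.2 ⟨n, ?_⟩
    exact hn.trans_le (birkhoffSum_le_maxBirkhoffSum le_rfl x)
  have hlim := tendsto_setIntegral_of_monotone hPm hPmono hg.integrableOn
  rw [setIntegral_congr_set hPuniv, setIntegral_univ] at hlim
  exact ge_of_tendsto' hlim fun N => hT.setIntegral_maxBirkhoffSum_pos_nonneg hgm hg N

end MaximalErgodic

section Birkhoff

variable {α : Type*} [MeasurableSpace α] {μ : Measure α} {T : α → α} {g : α → ℝ}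

/-- The set where the Birkhoff sums are unbounded is forward invariant, hence trivial by
ergodicity; it cannot be of full measure by the maximal ergodic theorem. -/
theorem Ergodic.ae_bddAbove_birkhoffSum [IsFiniteMeasure μ] (hT : Ergodic T μ)
    (hgm : Measurable g) (hg : Integrable g μ) (hneg : ∫ x, g x ∂μ < 0) :
    ∀ᵐ x ∂μ, BddAbove (range fun n => birkhoffSum T g n x) := by
  set I := {x | ¬BddAbove (range fun n => birkhoffSum T g n x)}
  have hI : MeasurableSet I :=
    (measurableSet_bddAbove_range fun n => measurable_birkhoffSum hT.measurable hgm n).compl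
  have hTI : T ⁻¹' I ⊆ I := by
    rintro x hx ⟨K, hK⟩
    refine hx ⟨K - g x, ?_⟩
    rintro _ ⟨n, rfl⟩
    have hn : birkhoffSum T g (n + 1) x ≤ K := hK ⟨n + 1, rfl⟩
    rw [birkhoffSum_succ'] at hn
    exact le_sub_iff_add_le'.2 hn
  rcases hT.ae_empty_or_univ_of_preimage_ae_le hI.nullMeasurableSet (.of_forall hTI) with h | h
  · exact h.mem_iff.mono fun x hx => not_not.1 fun hxI => hx.1 hxI
  · refine absurd (hT.integral_nonneg_of_ae_exists_birkhoffSum_pos hgm hg ?_) hneg.not_ge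
    refine h.mem_iff.mono fun x hx => ?_
    obtain ⟨_, ⟨n, rfl⟩, hn⟩ := not_bddAbove_iff.1 (hx.2 trivial) 0
    exact ⟨n, hn⟩

theorem Ergodic.ae_eventually_birkhoffAverage_lt [IsProbabilityMeasure μ] (hT : Ergodic T μ)
    (hgm : Measurable g) (hg : Integrable g μ) {c : ℝ} (hc : ∫ x, g x ∂μ < c) :
    ∀ᵐ x ∂μ, ∀ᶠ n in atTop, birkhoffAverage ℝ T g n x < c := by
  obtain ⟨c', hgc', hc'c⟩ := exists_between hc
  have hneg : ∫ x, (g x - c') ∂μ < 0 := by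
    rw [integral_sub hg (integrable_const c'), integral_const, probReal_univ, one_smul]
    linarith
  filter_upwards
    [hT.ae_bddAbove_birkhoffSum (hgm.sub_const c') (hg.sub (integrable_const c')) hneg]
    with x ⟨K, hK⟩
  filter_upwards [tendsto_natCast_atTop_atTop.eventually_gt_atTop (K / (c - c')),
    eventually_gt_atTop 0] with n hnK hn
  have hsum : birkhoffSum T (fun x => g x - c') n x = birkhoffSum T g n x - n * c' := by
    simp [birkhoffSum, Finset.sum_sub_distrib]
  have hK' : birkhoffSum T (fun x => g x - c') n x ≤ K := hK ⟨n, rfl⟩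
  rw [hsum] at hK'
  rw [div_lt_iff₀ (by linarith)] at hnK
  rw [birkhoffAverage, smul_eq_mul, inv_mul_lt_iff₀ (by positivity)]
  linarith

theorem Ergodic.ae_forall_eventually_birkhoffAverage_lt [IsProbabilityMeasure μ]
    (hT : Ergodic T μ) (hgm : Measurable g) (hg : Integrable g μ) :
    ∀ᵐ x ∂μ, ∀ c, ∫ x, g x ∂μ < c → ∀ᶠ n in atTop, birkhoffAverage ℝ T g n x < c := by
  have hrat : ∀ᵐ x ∂μ, ∀ q : {q : ℚ // ∫ x, g x ∂μ < q},
      ∀ᶠ n in atTop, birkhoffAverage ℝ T g n x < q :=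
    ae_all_iff.2 fun q => hT.ae_eventually_birkhoffAverage_lt hgm hg q.2
  filter_upwards [hrat] with x hx c hc
  obtain ⟨q, hgq, hqc⟩ := exists_rat_btwn hc
  exact (hx ⟨q, hgq⟩).mono fun n hn => hn.trans hqc

theorem Ergodic.ae_tendsto_birkhoffAverage [IsProbabilityMeasure μ] (hT : Ergodic T μ)
    (hgm : Measurable g) (hg : Integrable g μ) :
    ∀ᵐ x ∂μ, Tendsto (birkhoffAverage ℝ T g · x) atTop (𝓝 (∫ x, g x ∂μ)) := by
  filter_upwards [hT.ae_forall_eventually_birkhoffAverage_lt hgm hg,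
    hT.ae_forall_eventually_birkhoffAverage_lt hgm.neg hg.neg] with x hupper hlower
  refine tendsto_order.2 ⟨fun c hc => ?_, hupper⟩
  refine (hlower (-c) (by simpa only [Pi.neg_apply, integral_neg, neg_lt_neg_iff])).mono
    fun n hn => ?_
  simp only [birkhoffAverage_neg, Pi.neg_apply] at hn
  linarith

end Birkhoff

theorem dist_birkhoffAverage_birkhoffAverage_le_of_forall_dist_le {α E : Type*}
    [SeminormedAddCommGroup E] [NormedSpace ℝ E] (T : α → α) {g g' : α → E} {C : ℝ}
    (hC : 0 ≤ C) (h : ∀ y, dist (g y) (g' y) ≤ C) (n : ℕ) (x : α) :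
    dist (birkhoffAverage ℝ T g n x) (birkhoffAverage ℝ T g' n x) ≤ C :=
  calc dist (birkhoffAverage ℝ T g n x) (birkhoffAverage ℝ T g' n x)
      = dist (birkhoffSum T g n x) (birkhoffSum T g' n x) / n := by
        simp [birkhoffAverage, dist_smul₀, div_eq_inv_mul]
    _ ≤ (∑ k ∈ range n, dist (g (T^[k] x)) (g' (T^[k] x))) / n := by
        gcongr; exact dist_sum_sum_le _ _ _
    _ ≤ (∑ _k ∈ range n, C) / n := by gcongr; exact h _
    _ ≤ C := by
        rcases eq_or_ne n 0 with rfl | hn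
        · simpa using hC
        · simp [hn]

theorem ContinuousMap.continuous_integral {X : Type*} [TopologicalSpace X] [CompactSpace X]
    [MeasurableSpace X] [BorelSpace X] {μ : Measure X} [IsFiniteMeasure μ] :
    Continuous fun f : C(X, ℝ) => ∫ x, f x ∂μ :=
  (MeasureTheory.continuous_integral.comp (ContinuousMap.toLp 1 μ ℝ).continuous).congr fun f =>
    integral_congr_ae (ContinuousMap.coeFn_toLp μ f)

section ContinuousMap

variable {X : Type*} [MetricSpace X] [CompactSpace X] [MeasurableSpace X] [BorelSpace X]
  {μ : Measure X} [IsProbabilityMeasure μ] {T : X → X}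

theorem Ergodic.ae_forall_tendsto_birkhoffAverage_continuousMap (hT : Ergodic T μ) :
    ∀ᵐ x ∂μ, ∀ f : C(X, ℝ),
      Tendsto (birkhoffAverage ℝ T f · x) atTop (𝓝 (∫ y, f y ∂μ)) := by
  obtain ⟨u, hu⟩ := TopologicalSpace.exists_dense_seq C(X, ℝ)
  have hu_lim := ae_all_iff.2 fun i => hT.ae_tendsto_birkhoffAverage (u i).continuous.measurable
    ((u i).continuous.integrable_of_hasCompactSupport (.of_compactSpace _))
  filter_upwards [hu_lim] with x hx f
  have hLip : ∀ n, LipschitzWith 1 fun f : C(X, ℝ) => birkhoffAverage ℝ T f n x := fun n =>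
    LipschitzWith.of_dist_le_mul fun f f' => by
      simpa using dist_birkhoffAverage_birkhoffAverage_le_of_forall_dist_le T dist_nonneg
        (fun y => ContinuousMap.dist_apply_le_dist y) n x
  have hclosed : IsClosed {f : C(X, ℝ) | Tendsto (birkhoffAverage ℝ T f · x) atTop
      (𝓝 (∫ y, f y ∂μ))} :=
    (LipschitzWith.uniformEquicontinuous _ 1 hLip).equicontinuous.isClosed_setOfPred_tendsto
      ContinuousMap.continuous_integral
  exact hclosed.closure_subset_iff.2 (range_subset_iff.2 hx) (hu.closure_range ▸ mem_univ f)

end ContinuousMap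

theorem Metric.tendsto_smallSets_nhds_of_tendsto_diam {ι X : Type*} [PseudoMetricSpace X]
    {l : Filter ι} {s : ι → Set X} {x : X} (hx : ∀ i, x ∈ s i)
    (hb : ∀ i, Bornology.IsBounded (s i)) (hdiam : Tendsto (fun i => diam (s i)) l (𝓝 0)) :
    Tendsto s l (𝓝 x).smallSets := by
  refine nhds_basis_ball.smallSets.tendsto_right_iff.2 fun ε hε => ?_
  filter_upwards [hdiam.eventually_lt_const hε] with i hi y hy
  exact mem_ball.2 ((dist_le_diam_of_mem (hb i) hy (hx i)).trans_lt hi)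

theorem tendsto_setAverage_of_equicontinuousAt {ι X : Type*} [TopologicalSpace X]
    [MeasurableSpace X] {μ : Measure X} {l : Filter ι} {F : ι → X → ℝ} {x : X} {s : ι → Set X}
    {L : ℝ} (hF : EquicontinuousAt F x) (hs : Tendsto s l (𝓝 x).smallSets)
    (hsm : ∀ i, MeasurableSet (s i)) (hμ₀ : ∀ i, μ (s i) ≠ 0) (hμ : ∀ i, μ (s i) ≠ ⊤)
    (hint : ∀ i, IntegrableOn (F i) (s i) μ) (hFx : Tendsto (F · x) l (𝓝 L)) :
    Tendsto (fun i => ⨍ y in s i, F i y ∂μ) l (𝓝 L) := by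
  refine hFx.congr_dist (Metric.tendsto_nhds.2 fun ε hε => ?_)
  have hnear := Metric.equicontinuousAt_iff_right.1 hF (ε / 2) (half_pos hε)
  filter_upwards [hs.eventually (eventually_smallSets_forall.2 hnear)] with i hi
  have hmem : ⨍ y in s i, F i y ∂μ ∈ closedBall (F i x) (ε / 2) :=
    (convex_closedBall _ _).set_average_mem isClosed_closedBall (hμ₀ i) (hμ i)
      (ae_restrict_of_forall_mem (hsm i) fun y hy => mem_closedBall'.2 (hi y hy i).le) (hint i)
  rw [dist_zero_right, Real.norm_eq_abs, abs_of_nonneg dist_nonneg]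
  exact (mem_closedBall'.1 hmem).trans_lt (half_lt_self hε)

theorem ae_measure_ne_zero_of_countable_range {α : Type*} [MeasurableSpace α] {μ : Measure α}
    {s : α → Set α} (hs : (range s).Countable) (hmem : ∀ x, x ∈ s x) :
    ∀ᵐ x ∂μ, μ (s x) ≠ 0 := by
  have hnull : μ (⋃ t ∈ {t ∈ range s | μ t = 0}, t) = 0 :=
    (measure_biUnion_null_iff (hs.mono inter_subset_left)).2 fun _ ht => ht.2
  refine measure_mono_null (fun x hx => ?_) hnull
  exact Set.mem_biUnion ⟨mem_range_self x, not_not.1 hx⟩ (hmem x)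

section Cylinder

variable {α D : Type*} (T : α → α) (E : D → Set α)

def itineraryCylinder (x : α) (k : ℕ) : Set α :=
  {y | ∀ i < k, ∀ d, T^[i] x ∈ E d ↔ T^[i] y ∈ E d}

theorem mem_itineraryCylinder_self (x : α) (k : ℕ) : x ∈ itineraryCylinder T E x k :=
  fun _ _ _ => Iff.rfl

theorem measurableSet_itineraryCylinder [MeasurableSpace α] [Countable D] (hT : Measurable T)
    (hE : ∀ d, MeasurableSet (E d)) (x : α) (k : ℕ) :
    MeasurableSet (itineraryCylinder T E x k) := by
  simp only [itineraryCylinder, ofPred_forall]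
  exact .iInter fun i => .iInter fun _ => .iInter fun d => measurableSet_setOfPred.2 <|
    measurable_const.iff (measurableSet_setOfPred.1 ((hT.iterate i) (hE d)))

theorem finite_range_itineraryCylinder [Finite D] (k : ℕ) :
    (range (itineraryCylinder T E · k)).Finite := by
  refine (finite_range fun p : Fin k → D → Prop =>
    {y | ∀ i : Fin k, ∀ d, p i d ↔ T^[i] y ∈ E d}).subset ?_
  rintro _ ⟨x, rfl⟩
  exact ⟨fun i d => T^[i] x ∈ E d, by ext; simp [itineraryCylinder, Fin.forall_iff]⟩

end Cylinder

theorem nonexpansive_random_cylinders_general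
    {X D : Type*} [MetricSpace X] [CompactSpace X] [MeasurableSpace X] [BorelSpace X]
    [Fintype D]
    (μ : Measure X) [IsProbabilityMeasure μ]
    (T : X ≃ₜ X) (hLip : ∀ x y : X, dist (T x) (T y) ≤ dist x y)
    (hErg : Ergodic (⇑T) μ)
    (E : D → Set X) (hEm : ∀ d, MeasurableSet (E d))
    (C : X → ℕ → Set X)
    (hC : ∀ x k, C x k =
      {y : X | ∀ i < k, ∀ d : D, (⇑T)^[i] x ∈ E d ↔ (⇑T)^[i] y ∈ E d})
    (hdiam : ∀ᵐ x ∂μ, Tendsto (fun k => Metric.diam (C x k)) atTop (𝓝 0)) :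
    ∀ᵐ x ∂μ, ∀ f : C(X, ℝ),
      Tendsto (fun k : ℕ => (μ (C x k)).toReal⁻¹ *
          ∫ y in C x k, (k : ℝ)⁻¹ * ∑ i ∈ range k, f ((⇑T)^[i] y) ∂μ)
        atTop (𝓝 (∫ y, f y ∂μ)) := by
  obtain rfl : C = itineraryCylinder T E := funext fun x => funext fun k => hC x k
  have hT : LipschitzWith 1 T := .of_dist_le_mul fun x y => by simpa using hLip x y
  have hpos : ∀ᵐ x ∂μ, ∀ k, μ (itineraryCylinder T E x k) ≠ 0 := ae_all_iff.2 fun k =>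
    ae_measure_ne_zero_of_countable_range (finite_range_itineraryCylinder T E k).countable
      (mem_itineraryCylinder_self T E · k)
  filter_upwards [hErg.ae_forall_tendsto_birkhoffAverage_continuousMap, hpos, hdiam]
    with x hx hpx hdx f
  have hf : Integrable f μ := f.continuous.integrable_of_hasCompactSupport (.of_compactSpace _)
  have hequi : EquicontinuousAt (birkhoffAverage ℝ T f) x :=
    (uniformEquicontinuous_birkhoffAverage ℝ hT
      (CompactSpace.uniformContinuous_of_continuous f.continuous)).equicontinuous x
  have hshrink : Tendsto (itineraryCylinder T E x) atTop (𝓝 x).smallSets :=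
    tendsto_smallSets_nhds_of_tendsto_diam (mem_itineraryCylinder_self T E x) (fun _ => .all _) hdx
  refine (tendsto_setAverage_of_equicontinuousAt hequi hshrink
    (measurableSet_itineraryCylinder T E T.continuous.measurable hEm x) hpx
    (fun _ => measure_ne_top _ _)
    (fun k => ((hErg.integrable_birkhoffSum hf k).smul (k : ℝ)⁻¹).integrableOn) (hx f)).congr
    fun k => ?_
  simp only [setAverage_eq, measureReal_def, birkhoffAverage, birkhoffSum, smul_eq_mul]

/-- Spatial-temporal differentiation along random cylinders for a 1-Lipschitz
homeomorphism: if the cylinders of a finite generating partition have diameters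
tending to `0` almost everywhere, then for almost every `x` the averages of
Birkhoff means of any continuous `f` over `C_k(x)` converge to `∫ f dμ`. -/
theorem nonexpansive_random_cylinders
    {X D : Type*} [MetricSpace X] [CompactSpace X] [MeasurableSpace X] [BorelSpace X]
    [Fintype D]
    (μ : Measure X) [IsProbabilityMeasure μ]
    (T : X ≃ₜ X) (hLip : ∀ x y : X, dist (T x) (T y) ≤ dist x y)
    (hErg : Ergodic (⇑T) μ)
    (E : D → Set X) (hEm : ∀ d, MeasurableSet (E d))
    (hEdisj : Pairwise (Function.onFun Disjoint E))
    (hEcov : (⋃ d, E d) = Set.univ)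
    (hgen : MeasurableSpace.generateFrom
        {s : Set X | ∃ (n : ℤ) (d : D), s = (T.toEquiv ^ n) '' E d} = ‹MeasurableSpace X›)
    (C : X → ℕ → Set X)
    (hC : ∀ x k, C x k =
      {y : X | ∀ i < k, ∀ d : D, (⇑T)^[i] x ∈ E d ↔ (⇑T)^[i] y ∈ E d})
    (hdiam : ∀ᵐ x ∂μ, Tendsto (fun k => Metric.diam (C x k)) atTop (𝓝 0)) :
    ∀ᵐ x ∂μ, ∀ f : C(X, ℝ),
      Tendsto (fun k : ℕ => (μ (C x k)).toReal⁻¹ *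
          ∫ y in C x k, (k : ℝ)⁻¹ * ∑ i ∈ range k, f ((⇑T)^[i] y) ∂μ)
        atTop (𝓝 (∫ y, f y ∂μ)) :=
  nonexpansive_random_cylinders_general μ T hLip hErg E hEm C hC hdiam
end

section
/- Let (X, 𝓑, μ, T) be an ergodic subshift with X ⊆ 𝒟^ℤ, and let x ∈ X such that μ(C_k(x)) > 0 for all k. Then the following are equivalent: (2) for every word a = (a_0,…,a_{ℓ−1}), lim_k (1/k)∑_{i=0}^{k-1} (1/μ(C_k(x))) ∫_{C_k(x)} χ_{[a]}∘T^i dμ = μ([a]); (3) for every word a, lim_k #{i ∈ [0, k−ℓ] : x_{i+j} = a_j for 0 ≤ j ≤ ℓ−1}/k = μ([a]). -/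
/-!
For `i + ℓ ≤ k` the cylinder `C_k(x)` lies entirely inside or entirely outside `T^{-i}[a]`,
according to whether `a` occurs in `x` at position `i`, so the `i`-th average in (2) is the
`i`-th summand of the word count in (3). The two Cesàro means thus differ only in their last `ℓ`
terms, each of size at most `1`, hence by at most `ℓ / k`.
-/

open MeasureTheory Filter Finset Topology

section Averages

variable {α E : Type*} [MeasurableSpace α] [NormedAddCommGroup E] [NormedSpace ℝ E]
  {μ : Measure α}

theorem norm_average_le_of_norm_le_const [IsFiniteMeasure μ] {f : α → E} {C : ℝ} (hC : 0 ≤ C)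
    (h : ∀ᵐ x ∂μ, ‖f x‖ ≤ C) : ‖⨍ x, f x ∂μ‖ ≤ C := by
  rw [average_eq, norm_smul, Real.norm_of_nonneg (inv_nonneg.2 measureReal_nonneg)]
  rcases eq_or_ne (μ.real Set.univ) 0 with h0 | h0
  · simpa [h0] using hC
  · calc (μ.real Set.univ)⁻¹ * ‖∫ x, f x ∂μ‖ ≤ (μ.real Set.univ)⁻¹ * (C * μ.real Set.univ) :=
          mul_le_mul_of_nonneg_left (norm_integral_le_of_norm_le_const h)
            (inv_nonneg.2 measureReal_nonneg)
      _ = C := by field_simp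

theorem setAverage_eq_of_forall_mem [CompleteSpace E] {s : Set α} (hs : MeasurableSet s)
    (hs₀ : μ s ≠ 0) (hs_top : μ s ≠ ⊤) {f : α → E} {c : E} (hf : ∀ x ∈ s, f x = c) :
    ⨍ x in s, f x ∂μ = c := by
  rw [setAverage_congr_fun hs (Eventually.of_forall hf), setAverage_const hs₀ hs_top]

theorem norm_average_indicator_comp_le [IsFiniteMeasure μ] {β : Type*} (t : Set β) (f : α → β) :
    ‖⨍ x, t.indicator (fun _ => (1 : ℝ)) (f x) ∂μ‖ ≤ 1 :=
  norm_average_le_of_norm_le_const zero_le_one <| Eventually.of_forall fun _ =>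
    (norm_indicator_le_norm_self _ _).trans norm_one.le

end Averages

theorem abs_sum_range_sub_sum_range_le {u v : ℕ → ℝ} {k ℓ : ℕ}
    (h_eq : ∀ i, i + ℓ ≤ k → u i = v i) (h_le : ∀ i, |u i - v i| ≤ 1) :
    |∑ i ∈ range k, u i - ∑ i ∈ range k, v i| ≤ ℓ := by
  rw [← sum_sub_distrib, ← sum_range_add_sum_Ico _ (Nat.sub_le k ℓ)]
  have h_head : ∑ i ∈ range (k - ℓ), (u i - v i) = 0 :=
    sum_eq_zero fun i hi => sub_eq_zero.2 (h_eq i (by rw [mem_range] at hi; omega))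
  calc |∑ i ∈ range (k - ℓ), (u i - v i) + ∑ i ∈ Ico (k - ℓ) k, (u i - v i)|
      ≤ ∑ i ∈ Ico (k - ℓ) k, |u i - v i| := by
        rw [h_head, zero_add]; exact abs_sum_le_sum_abs _ _
    _ ≤ ∑ _i ∈ Ico (k - ℓ) k, (1 : ℝ) := sum_le_sum fun i _ => h_le i
    _ ≤ ℓ := by simp only [sum_const, Nat.card_Ico, nsmul_eq_mul, mul_one]; norm_cast; omega

theorem tendsto_inv_mul_sum_range_iff {u v : ℕ → ℕ → ℝ} (ℓ : ℕ)
    (h_eq : ∀ k i, i + ℓ ≤ k → u k i = v k i) (h_le : ∀ k i, |u k i - v k i| ≤ 1) {L : ℝ} :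
    Tendsto (fun k : ℕ => (k : ℝ)⁻¹ * ∑ i ∈ range k, u k i) atTop (𝓝 L) ↔
      Tendsto (fun k : ℕ => (k : ℝ)⁻¹ * ∑ i ∈ range k, v k i) atTop (𝓝 L) := by
  refine tendsto_iff_of_dist (squeeze_zero (fun _ => dist_nonneg) (fun k => ?_)
    (tendsto_const_div_atTop_nhds_zero_nat (ℓ : ℝ)))
  rw [Real.dist_eq, ← mul_sub, abs_mul, abs_inv, Nat.abs_cast, inv_mul_eq_div]
  exact div_le_div_of_nonneg_right (abs_sum_range_sub_sum_range_le (h_eq k) (h_le k))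
    k.cast_nonneg

theorem natCast_card_filter_range_succ {P : ℕ → Prop} [DecidablePred P] {k ℓ : ℕ} (hℓ : 0 < ℓ) :
    (((range (k + 1)).filter (fun i => i + ℓ ≤ k ∧ P i)).card : ℝ) =
      ∑ i ∈ range k, if i + ℓ ≤ k ∧ P i then 1 else 0 := by
  rw [range_add_one, filter_insert, if_neg (fun h => by omega), natCast_card_filter]

namespace Subshift

variable {D : Type*} {X : Set (ℤ → D)}

def cylinder (x : X) (k : ℕ) : Set X :=
  {y : X | ∀ i : ℕ, i < k → (y : ℤ → D) (i : ℤ) = (x : ℤ → D) (i : ℤ)}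

def wordCylinder {ℓ : ℕ} (a : Fin ℓ → D) : Set X :=
  {z : X | ∀ j : Fin ℓ, (z : ℤ → D) (j : ℤ) = a j}

def IsShift (T : X → X) : Prop :=
  ∀ (x : X) (n : ℤ), (T x : ℤ → D) n = (x : ℤ → D) (n + 1)

-- Reducible, so that its `Decidable` instance is the one of the unfolded `∀ j, …`.
abbrev OccursAt (x : ℤ → D) {ℓ : ℕ} (a : Fin ℓ → D) (i : ℕ) : Prop :=
  ∀ j : Fin ℓ, x ((i : ℤ) + (j : ℤ)) = a j

theorem iterate_apply {T : X → X} (hT : IsShift T) (i : ℕ) (y : X) (n : ℤ) :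
    (T^[i] y : ℤ → D) n = (y : ℤ → D) (n + i) := by
  induction i generalizing y with
  | zero => simp
  | succ i ih => rw [Function.iterate_succ_apply, ih, hT]; push_cast; ring_nf

theorem iterate_mem_wordCylinder_iff {T : X → X} (hT : IsShift T) {ℓ : ℕ} (a : Fin ℓ → D)
    {x y : X} {k i : ℕ} (hy : y ∈ cylinder x k) (hik : i + ℓ ≤ k) :
    T^[i] y ∈ wordCylinder a ↔ OccursAt (x : ℤ → D) a i := by
  refine forall_congr' fun j => ?_
  have hj : (j : ℤ) + i = ((i + j : ℕ) : ℤ) := by push_cast; ring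
  rw [iterate_apply hT, hj, hy (i + j) (by omega), ← hj, add_comm]

variable [MeasurableSpace D]

theorem measurableSet_cylinder [MeasurableSingletonClass D] (x : X) (k : ℕ) :
    MeasurableSet (cylinder x k) := by
  simp only [cylinder, Set.ofPred_forall]
  exact .iInter fun i => .iInter fun _ =>
    measurableSet_singleton _ |>.preimage ((measurable_pi_apply _).comp measurable_subtype_coe)

theorem setAverage_indicator_wordCylinder [DecidableEq D] [MeasurableSingletonClass D]
    {T : X → X} (hT : IsShift T) (μ : Measure X) [IsFiniteMeasure μ] {x : X} {k : ℕ}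
    (hx : μ (cylinder x k) ≠ 0) {ℓ i : ℕ} (a : Fin ℓ → D) (hik : i + ℓ ≤ k) :
    ⨍ y in cylinder x k, (wordCylinder a).indicator (fun _ => (1 : ℝ)) (T^[i] y) ∂μ =
      if OccursAt (x : ℤ → D) a i then 1 else 0 :=
  setAverage_eq_of_forall_mem (measurableSet_cylinder x k) hx (measure_ne_top μ _)
    fun y hy => by
      classical simp only [Set.indicator_apply, iterate_mem_wordCylinder_iff hT a hy hik]

theorem tendsto_setAverage_iff_tendsto_frequency [DecidableEq D] [MeasurableSingletonClass D]
    {T : X → X} (hT : IsShift T) (μ : Measure X) [IsFiniteMeasure μ] {x : X}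
    (hx : ∀ k, μ (cylinder x k) ≠ 0) {ℓ : ℕ} (hℓ : 0 < ℓ) (a : Fin ℓ → D) {L : ℝ} :
    Tendsto (fun k : ℕ => (k : ℝ)⁻¹ * ∑ i ∈ range k, (μ (cylinder x k)).toReal⁻¹ *
        ∫ y in cylinder x k, (wordCylinder a).indicator (fun _ => (1 : ℝ)) (T^[i] y) ∂μ)
      atTop (𝓝 L) ↔
    Tendsto (fun k : ℕ => ((((range (k + 1)).filter
        (fun i => i + ℓ ≤ k ∧ OccursAt (x : ℤ → D) a i)).card : ℝ) / k)) atTop (𝓝 L) := by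
  simp only [← measureReal_def, ← smul_eq_mul (a := (μ.real _)⁻¹), ← setAverage_eq,
    natCast_card_filter_range_succ hℓ, div_eq_inv_mul]
  refine tendsto_inv_mul_sum_range_iff ℓ (fun k i hik => ?_) (fun k i => ?_)
  · simp only [setAverage_indicator_wordCylinder hT μ (hx k) a hik, hik, true_and]
  · by_cases hik : i + ℓ ≤ k
    · simp only [setAverage_indicator_wordCylinder hT μ (hx k) a hik, hik, true_and, sub_self,
        abs_zero, zero_le_one]
    · simpa only [hik, false_and, if_false, sub_zero, Real.norm_eq_abs] using
        norm_average_indicator_comp_le (μ := μ.restrict (cylinder x k)) (wordCylinder a) T^[i]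

end Subshift

theorem subshift_normal_point_iff_general
    {D : Type*} [DecidableEq D]
    [MeasurableSpace D] [MeasurableSingletonClass D]
    (X : Set (ℤ → D))
    (T : X → X) (hT : ∀ (x : X) (n : ℤ), (T x : ℤ → D) n = (x : ℤ → D) (n + 1))
    (μ : Measure X) [IsProbabilityMeasure μ]
    (C : X → ℕ → Set X)
    (hC : ∀ x k, C x k =
      {y : X | ∀ i : ℕ, i < k → (y : ℤ → D) (i : ℤ) = (x : ℤ → D) (i : ℤ)})
    (x : X) (hx : ∀ k, 0 < μ (C x k)) :
    (∀ (ℓ : ℕ), 0 < ℓ → ∀ a : Fin ℓ → D,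
      Tendsto (fun k : ℕ => (k : ℝ)⁻¹ * ∑ i ∈ range k,
          (μ (C x k)).toReal⁻¹ *
            ∫ y in C x k,
              Set.indicator {z : X | ∀ j : Fin ℓ, (z : ℤ → D) (j : ℤ) = a j}
                (fun _ => (1 : ℝ)) (T^[i] y) ∂μ)
        atTop (𝓝 ((μ {z : X | ∀ j : Fin ℓ, (z : ℤ → D) (j : ℤ) = a j}).toReal))) ↔
    (∀ (ℓ : ℕ), 0 < ℓ → ∀ a : Fin ℓ → D,
      Tendsto (fun k : ℕ =>
          ((((range (k + 1)).filter (fun i : ℕ => i + ℓ ≤ k ∧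
              ∀ j : Fin ℓ, (x : ℤ → D) ((i : ℤ) + (j : ℤ)) = a j)).card : ℝ) / k))
        atTop (𝓝 ((μ {z : X | ∀ j : Fin ℓ, (z : ℤ → D) (j : ℤ) = a j}).toReal))) := by
  obtain rfl : C = Subshift.cylinder := funext₂ hC
  exact forall_congr' fun ℓ => forall_congr' fun hℓ => forall_congr' fun a =>
    Subshift.tendsto_setAverage_iff_tendsto_frequency hT μ (fun k => (hx k).ne') hℓ a

/-- Equivalence (2) ⟺ (3) of the theorem on normal points of a subshift:
convergence of the spatial-temporal averages of all cylinder indicators to the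
measures of the cylinders is equivalent to all words having the correct
asymptotic frequencies in `x`. -/
theorem subshift_normal_point_iff
    {D : Type*} [Fintype D] [DecidableEq D] [TopologicalSpace D] [DiscreteTopology D]
    [MeasurableSpace D] [MeasurableSingletonClass D]
    (X : Set (ℤ → D)) (hXc : IsCompact X)
    (T : X → X) (hT : ∀ (x : X) (n : ℤ), (T x : ℤ → D) n = (x : ℤ → D) (n + 1))
    (hTsurj : Function.Surjective T)
    (μ : Measure X) [IsProbabilityMeasure μ] (hErg : Ergodic T μ)
    (C : X → ℕ → Set X)
    (hC : ∀ x k, C x k =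
      {y : X | ∀ i : ℕ, i < k → (y : ℤ → D) (i : ℤ) = (x : ℤ → D) (i : ℤ)})
    (x : X) (hx : ∀ k, 0 < μ (C x k)) :
    (∀ (ℓ : ℕ), 0 < ℓ → ∀ a : Fin ℓ → D,
      Tendsto (fun k : ℕ => (k : ℝ)⁻¹ * ∑ i ∈ range k,
          (μ (C x k)).toReal⁻¹ *
            ∫ y in C x k,
              Set.indicator {z : X | ∀ j : Fin ℓ, (z : ℤ → D) (j : ℤ) = a j}
                (fun _ => (1 : ℝ)) (T^[i] y) ∂μ)
        atTop (𝓝 ((μ {z : X | ∀ j : Fin ℓ, (z : ℤ → D) (j : ℤ) = a j}).toReal))) ↔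
    (∀ (ℓ : ℕ), 0 < ℓ → ∀ a : Fin ℓ → D,
      Tendsto (fun k : ℕ =>
          ((((range (k + 1)).filter (fun i : ℕ => i + ℓ ≤ k ∧
              ∀ j : Fin ℓ, (x : ℤ → D) ((i : ℤ) + (j : ℤ)) = a j)).card : ℝ) / k))
        atTop (𝓝 ((μ {z : X | ∀ j : Fin ℓ, (z : ℤ → D) (j : ℤ) = a j}).toReal))) :=
  subshift_normal_point_iff_general X T hT μ C hC x hx
end
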